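/- Let q be even and let (I₁,…,I_m) be an ordered sequence of q-element subsets of {1,…,n} such that every q-element subset appears an even number of times in the sequence. Then there exists ε ∈ {−1, 1} such that ψ_{I₁}⋯ψ_{I_m} = ε · 2^{−qm/2} · 1. -/

import Mathlib

open MeasureTheory Filter

noncomputable section

namespace SYK

attribute [local instance] Classical.propDecidable

/-- The quadratic form on `ℂ^N` with `Q(x) = ½ Σ x_i²`, so that the Clifford
relation reads `ψ_i ψ_j + ψ_j ψ_i = δ_{ij}`. -/
def Qf (N : ℕ) : QuadraticForm ℂ (Fin N → ℂ) :=
  QuadraticMap.weightedSumSquares ℂ (fun _ : Fin N => (1 / 2 : ℂ))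

/-- The complex Clifford algebra with `N` Majorana generators. -/
abbrev Cliff (N : ℕ) := CliffordAlgebra (Qf N)

/-- The Majorana generator `ψ_i`. -/
def psi {N : ℕ} (i : Fin N) : Cliff N :=
  CliffordAlgebra.ι (Qf N) (Pi.single i 1)

/-- `ψ_I = i^{q/2} ψ_{i₁} ⋯ ψ_{i_q}` for `I = {i₁ < ⋯ < i_q}`. -/
def psiSet {N : ℕ} (q : ℕ) (I : Finset (Fin N)) : Cliff N :=
  (Complex.I) ^ (q / 2) • ((I.sort (· ≤ ·)).map psi).prod

lemma Qf_single {N : ℕ} (i : Fin N) : Qf N (Pi.single i 1) = 1/2 := by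
  simp [Qf, QuadraticMap.weightedSumSquares_apply, Pi.single_apply]

lemma psi_sq {N : ℕ} (i : Fin N) : psi i * psi i = (1/2 : ℂ) • 1 := by
  rw [psi, CliffordAlgebra.ι_sq_scalar, Qf_single, Algebra.algebraMap_eq_smul_one]

lemma psi_anticomm {N : ℕ} {i j : Fin N} (h : i ≠ j) :
    psi i * psi j = - (psi j * psi i) := by
  have key := CliffordAlgebra.ι_mul_ι_add_swap (Q := Qf N) (Pi.single i 1) (Pi.single j 1)
  have hp : QuadraticMap.polar (Qf N) (Pi.single i 1) (Pi.single j 1) = 0 := by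
    simp only [QuadraticMap.polar, Qf, QuadraticMap.weightedSumSquares_apply, Pi.add_apply,
      Pi.single_apply, smul_eq_mul]
    have h1 : ∀ x ∈ Finset.univ, (1/2 : ℂ) *
        (((if x = i then (1:ℂ) else 0) + if x = j then 1 else 0) *
          ((if x = i then (1:ℂ) else 0) + if x = j then 1 else 0))
        = ((if x = i then (2⁻¹:ℂ) else 0) + (if x = j then (2⁻¹:ℂ) else 0)) := by
      intro x _
      by_cases hx : x = i <;> by_cases hy : x = j <;> simp_all <;> norm_num
    rw [Finset.sum_congr rfl h1]
    simp [Finset.sum_add_distrib, mul_ite]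
  rw [hp, map_zero] at key
  have key' : psi i * psi j + psi j * psi i = 0 := by simpa [psi] using key
  exact eq_neg_of_add_eq_zero_left key'

lemma perm_sign {N : ℕ} {L1 L2 : List (Fin N)} (h : L1.Perm L2) :
    ∃ ε : ℂ, (ε = 1 ∨ ε = -1) ∧ (L1.map psi).prod = ε • (L2.map psi).prod := by
  induction h with
  | nil => exact ⟨1, Or.inl rfl, by simp⟩
  | cons x h ih =>
    obtain ⟨ε, hε, he⟩ := ih
    exact ⟨ε, hε, by simp [he, mul_smul_comm]⟩
  | swap x y t =>
    by_cases hxy : y = x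
    · subst hxy; exact ⟨1, Or.inl rfl, by simp⟩
    · refine ⟨-1, Or.inr rfl, ?_⟩
      simp only [List.map_cons, List.prod_cons, ← mul_assoc, psi_anticomm hxy,
        neg_smul, one_smul, neg_mul]
  | trans h1 h2 ih1 ih2 =>
    obtain ⟨ε1, hε1, he1⟩ := ih1
    obtain ⟨ε2, hε2, he2⟩ := ih2
    refine ⟨ε1 * ε2, ?_, by rw [he1, he2, smul_smul]⟩
    rcases hε1 with h | h <;> rcases hε2 with h' | h' <;> simp [h, h']

lemma normalize {N : ℕ} (L : List (Fin N)) : ∃ (ε : ℂ) (k : ℕ) (M : List (Fin N)),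
    (ε = 1 ∨ ε = -1) ∧ M.Nodup ∧ (∀ j, j ∈ M ↔ ¬ Even (L.count j)) ∧
    L.length = M.length + 2*k ∧ (L.map psi).prod = (ε * (2:ℂ)⁻¹^k) • (M.map psi).prod := by
  induction L with
  | nil => exact ⟨1, 0, [], Or.inl rfl, by simp, by simp, by simp, by simp⟩
  | cons i L ih =>
    obtain ⟨ε, k, M, hε, hnd, hmem, hlen, hprod⟩ := ih
    by_cases hi : i ∈ M
    · have hperm : M.Perm (i :: M.erase i) := List.perm_cons_erase hi
      obtain ⟨δ, hδ, hMe⟩ := perm_sign hperm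
      refine ⟨ε * δ, k + 1, M.erase i, ?_, hnd.erase i, ?_, ?_, ?_⟩
      · rcases hε with h | h <;> rcases hδ with h' | h' <;> simp [h, h']
      · intro j
        rw [hnd.mem_erase_iff]
        rw [List.count_cons]
        by_cases hj : j = i
        · subst hj
          have hodd : ¬ Even (L.count j) := (hmem j).1 hi
          simpa [Nat.even_add_one] using hodd
        · have hij : ¬ i = j := fun h => hj h.symm
          simp [hj, hij, hmem]
      · have hM : M.length = (M.erase i).length + 1 := by
          rw [List.length_erase_of_mem hi]
          have : M.length ≠ 0 := by
            intro h0; rw [List.length_eq_zero_iff] at h0; simp [h0] at hi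
          omega
        simp only [List.length_cons, hlen, hM]; ring
      · have h1 : (M.map psi).prod = δ • (psi i * ((M.erase i).map psi).prod) := by
          simpa using hMe
        simp only [List.map_cons, List.prod_cons, hprod, h1, mul_smul_comm, smul_smul,
          ← mul_assoc, psi_sq, smul_mul_assoc, one_mul]
        congr 1
        ring
    · refine ⟨ε, k, i :: M, hε, ?_, ?_, ?_, ?_⟩
      · exact List.nodup_cons.2 ⟨hi, hnd⟩
      · intro j
        rw [List.count_cons, List.mem_cons]
        by_cases hj : j = i
        · subst hj
          have hev : Even (L.count j) := not_not.1 (fun h => hi ((hmem j).2 h))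
          simpa [Nat.even_add_one] using hev
        · have hij : ¬ i = j := fun h => hj h.symm
          simp [hj, hij, hmem]
      · simp [hlen]; ring
      · simp [List.map_cons, List.prod_cons, hprod, mul_smul_comm]

lemma unfold_prod {n : ℕ} (q : ℕ) (l : List (Finset (Fin n))) :
    (l.map (psiSet q)).prod = (Complex.I ^ (q / 2)) ^ l.length •
      (((l.flatMap fun I => I.sort (· ≤ ·)).map psi)).prod := by
  induction l with
  | nil => simp
  | cons I l ih =>
    simp only [List.map_cons, List.prod_cons, ih, List.flatMap_cons, List.map_append,
      List.prod_append, psiSet, List.length_cons, smul_mul_smul_comm]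
    rw [pow_succ]
    ring_nf

/-- If every `q`-element subset appears an even number of times in the
sequence `(I₁,…,I_m)`, then `ψ_{I₁} ⋯ ψ_{I_m} = ε · 2^{−qm/2} · 1` for some sign `ε ∈ {−1,1}`. -/
theorem psiSet_prod_eq_sign (q n : ℕ) (hq : Even q) (hq2 : 2 ≤ q) (hn : q ≤ n)
    (l : List (Finset (Fin n))) (hcard : ∀ I ∈ l, I.card = q)
    (heven : ∀ I : Finset (Fin n), Even (l.count I)) :
    ∃ ε : ℝ, (ε = 1 ∨ ε = -1) ∧
      (l.map (psiSet q)).prod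
        = ((ε : ℂ) * ((2 : ℂ) ^ (q * l.length / 2))⁻¹) • (1 : Cliff n) := by
  set flat := l.flatMap fun I => I.sort (· ≤ ·) with hflat
  have hcount : ∀ j : Fin n, Even (flat.count j) := by
    intro j
    rw [hflat, List.count_flatMap]
    rw [Finset.sum_list_map_count]
    apply Finset.even_sum
    intro I _
    exact (heven I).mul_right _
  have hflatlen : flat.length = q * l.length := by
    rw [hflat, List.length_flatMap]
    have : ∀ I ∈ l, (List.length ∘ fun I : Finset (Fin n) => I.sort (· ≤ ·)) I = q := by
      intro I hI
      simp [Finset.length_sort, hcard I hI]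
    have this' : ∀ I ∈ l, (fun a : Finset (Fin n) => (a.sort (· ≤ ·)).length) I = q := this
    rw [List.map_congr_left this', List.map_const', List.sum_replicate, smul_eq_mul]
    ring
  have hm : Even l.length := by
    rw [← List.sum_toFinset_count_eq_length]
    exact Finset.even_sum _ fun I _ => heven I
  obtain ⟨ε, k, M, hε, hnd, hmem, hlen, hprod⟩ := normalize flat
  have hM : M = [] := by
    rw [List.eq_nil_iff_forall_not_mem]
    intro j hj
    exact (hmem j).1 hj (hcount j)
  subst hM
  have hk : q * l.length = 2 * k := by
    rw [← hflatlen, hlen]; simp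
  have hkdiv : q * l.length / 2 = k := by omega
  obtain ⟨t, ht⟩ := hm
  have hI : (Complex.I ^ (q / 2)) ^ l.length = ((-1 : ℂ)) ^ (q / 2 * t) := by
    rw [← pow_mul]
    have : q / 2 * l.length = 2 * (q / 2 * t) := by rw [ht]; ring
    rw [this, pow_mul, Complex.I_sq]
  rw [unfold_prod, hprod, hI, smul_smul]
  simp only [List.map_nil, List.prod_nil]
  rcases Nat.even_or_odd (q / 2 * t) with hp | hp
  · rcases hε with he | he
    · refine ⟨1, Or.inl rfl, ?_⟩
      rw [hp.neg_one_pow, he, hkdiv, inv_pow]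
      norm_num
    · refine ⟨-1, Or.inr rfl, ?_⟩
      rw [hp.neg_one_pow, he, hkdiv, inv_pow]
      push_cast
      ring_nf
  · rcases hε with he | he
    · refine ⟨-1, Or.inr rfl, ?_⟩
      rw [hp.neg_one_pow, he, hkdiv, inv_pow]
      push_cast
      ring_nf
    · refine ⟨1, Or.inl rfl, ?_⟩
      rw [hp.neg_one_pow, he, hkdiv, inv_pow]
      push_cast
      ring_nf

end SYK
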